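/- Let A and B be groups with A abelian, and let N ◁ B be a normal subgroup. The natural projection π_B : B → B/N extends to a surjective homomorphism π : A ≀ B → A ≀ (B/N) defined by π(f)(bN) = ∏_{x∈N} f(bx) on the base and by π_B on B, and ker(π) = K_N ⋊ N where K_N = {f ∈ ⊕_B A : ∏_{x∈N} f(bx) = 1 for all b ∈ B}. -/

import Mathlib

/-!
Push a finitely supported `f : B → A` forward along `B → B ⧸ N` by multiplying its values over
each fibre; since `A` is abelian this is a homomorphism of base groups, and it is equivariant for
left translation, so together with `B → B ⧸ N` it defines a homomorphism of semidirect products.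
The fibre over `bN` is the coset `bN`, which gives the formula `∏_{x ∈ N} f (b x)`. Any
finitely supported function on `B ⧸ N` is the push-forward of one supported on a set of coset
representatives, and the kernel is read off componentwise.
-/

open Function SemidirectProduct

def restrictedBase (A B : Type*) [Group A] [Group B] : Subgroup (B → A) where
  carrier := {f | (mulSupport f).Finite}
  one_mem' := by simp
  mul_mem' := fun {f g} hf hg => (hf.union hg).subset (mulSupport_mul f g)
  inv_mem' := fun {f} hf => by simpa using hf

lemma shift_finite (A B : Type*) [Group A] [Group B] (b : B) {f : B → A}
    (hf : (mulSupport f).Finite) : (mulSupport fun x => f (b⁻¹ * x)).Finite := by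
  apply (hf.image (fun x => b * x)).subset
  intro x hx
  exact ⟨b⁻¹ * x, hx, by simp⟩

def wreathAut (A B : Type*) [Group A] [Group B] (b : B) : MulAut (restrictedBase A B) where
  toFun f := ⟨fun x => (f : B → A) (b⁻¹ * x), shift_finite A B b f.2⟩
  invFun f := ⟨fun x => (f : B → A) (b * x), (by simpa using shift_finite A B b⁻¹ f.2 :
    (mulSupport fun x => (f : B → A) (b * x)).Finite)⟩
  left_inv f := Subtype.ext (funext fun x => by simp)
  right_inv f := Subtype.ext (funext fun x => by simp)
  map_mul' f g := rfl

def wreathHom (A B : Type*) [Group A] [Group B] : B →* MulAut (restrictedBase A B) where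
  toFun := wreathAut A B
  map_one' := by
    ext f x
    simp [wreathAut]
  map_mul' b c := by
    ext f x
    simp [wreathAut, mul_assoc]

abbrev Wreath (A B : Type*) [Group A] [Group B] :=
  restrictedBase A B ⋊[wreathHom A B] B

namespace SemidirectProduct

variable {N₁ G₁ N₂ G₂ : Type*} [Group N₁] [Group G₁] [Group N₂] [Group G₂]
  {φ₁ : G₁ →* MulAut N₁} {φ₂ : G₂ →* MulAut N₂} {fn : N₁ →* N₂} {fg : G₁ →* G₂}
  {h : ∀ g : G₁, fn.comp (φ₁ g).toMonoidHom = (φ₂ (fg g)).toMonoidHom.comp fn}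

theorem map_surjective (hn : Surjective fn) (hg : Surjective fg) : Surjective (map fn fg h) := by
  rintro ⟨n, g⟩
  obtain ⟨n', rfl⟩ := hn n
  obtain ⟨g', rfl⟩ := hg g
  exact ⟨⟨n', g'⟩, rfl⟩

theorem mem_ker_map (w : N₁ ⋊[φ₁] G₁) : w ∈ (map fn fg h).ker ↔ fn w.left = 1 ∧ fg w.right = 1 :=
  SemidirectProduct.ext_iff

end SemidirectProduct

theorem QuotientGroup.finprod_mem_preimage_mk_singleton {A B : Type*} [CommMonoid A] [Group B]
    (N : Subgroup B) (f : B → A) (b : B) :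
    ∏ᶠ y ∈ ((↑) : B → B ⧸ N) ⁻¹' {(b : B ⧸ N)}, f y = ∏ᶠ x : N, f (b * x) := by
  have hcoset : ((↑) : B → B ⧸ N) ⁻¹' {(b : B ⧸ N)} = Set.range (fun x : N => b * x) := by
    ext y
    rw [Set.mem_preimage, Set.mem_singleton_iff, eq_comm, QuotientGroup.eq]
    exact ⟨fun h => ⟨⟨_, h⟩, mul_inv_cancel_left b y⟩, by rintro ⟨x, rfl⟩; simp⟩
  rw [hcoset, finprod_mem_range fun x y h => Subtype.ext (mul_left_cancel h)]

theorem mulSupport_finprod_mem_fiber_subset {A B C : Type*} [CommMonoid A] (φ : B → C)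
    (f : B → A) : mulSupport (fun c => ∏ᶠ y ∈ φ ⁻¹' {c}, f y) ⊆ φ '' mulSupport f := by
  intro c hc
  by_contra hc'
  refine hc (finprod_mem_of_eqOn_one fun y hy => ?_)
  by_contra hfy
  exact hc' ⟨y, hfy, hy⟩

namespace restrictedBase

section Fibre

variable {A B C : Type*} [CommGroup A] [Group B] [Group C]

noncomputable def mapDomain (φ : B → C) : restrictedBase A B →* restrictedBase A C where
  toFun f := ⟨fun c => ∏ᶠ y ∈ φ ⁻¹' {c}, (f : B → A) y,
    (f.2.image φ).subset (mulSupport_finprod_mem_fiber_subset φ (f : B → A))⟩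
  map_one' := Subtype.ext <| funext fun _ => finprod_mem_one _
  map_mul' f g := Subtype.ext <| funext fun _ =>
    finprod_mem_mul_distrib' (f.2.subset Set.inter_subset_right) (g.2.subset Set.inter_subset_right)

theorem mapDomain_apply (φ : B → C) (f : restrictedBase A B) (c : C) :
    (mapDomain φ f : C → A) c = ∏ᶠ y ∈ φ ⁻¹' {c}, (f : B → A) y :=
  rfl

theorem mapDomain_surjective {φ : B → C} (hφ : Surjective φ) :
    Surjective (mapDomain φ : restrictedBase A B →* restrictedBase A C) := by
  intro g
  set s := surjInv hφ
  have hfibre (c : C) : φ ⁻¹' {c} ∩ Set.range s = {s c} := by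
    ext y
    constructor
    · rintro ⟨hy, d, rfl⟩
      rw [Set.mem_preimage, Set.mem_singleton_iff, surjInv_eq hφ] at hy
      rw [hy, Set.mem_singleton_iff]
    · rintro rfl
      exact ⟨surjInv_eq hφ c, c, rfl⟩
  have hfin : (mulSupport ((Set.range s).mulIndicator ((g : C → A) ∘ φ))).Finite := by
    refine (g.2.image s).subset ?_
    rintro y hy
    obtain ⟨c, rfl⟩ := Set.mem_of_mulIndicator_ne_one hy
    refine ⟨c, ?_, rfl⟩
    simpa [Set.mulIndicator_of_mem (Set.mem_range_self c), s, surjInv_eq hφ] using hy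
  refine ⟨⟨(Set.range s).mulIndicator ((g : C → A) ∘ φ), hfin⟩, Subtype.ext <| funext fun c => ?_⟩
  rw [mapDomain_apply, finprod_mem_def, Set.mulIndicator_mulIndicator, ← finprod_mem_def, hfibre,
    finprod_mem_singleton, Function.comp_apply, surjInv_eq hφ]

theorem mapDomain_wreathHom (φ : B →* C) (b : B) (f : restrictedBase A B) :
    mapDomain φ (wreathHom A B b f) = wreathHom A C (φ b) (mapDomain φ f) := by
  refine Subtype.ext <| funext fun c =>
    finprod_mem_eq_of_bijOn (b⁻¹ * ·) ⟨?_, ?_, ?_⟩ fun _ _ => rfl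
  · intro y hy
    simp_all
  · exact fun y _ z _ h => mul_left_cancel h
  · intro z hz
    exact ⟨b * z, by simp_all, by simp⟩

end Fibre

section Quotient

variable {A B : Type*} [CommGroup A] [Group B] (N : Subgroup B) [N.Normal]

theorem mapDomain_mk'_apply (f : restrictedBase A B) (b : B) :
    (mapDomain (QuotientGroup.mk' N) f : B ⧸ N → A) b = ∏ᶠ x : N, (f : B → A) (b * x) :=
  QuotientGroup.finprod_mem_preimage_mk_singleton N (f : B → A) b

theorem mapDomain_mk'_eq_one_iff (f : restrictedBase A B) :
    mapDomain (QuotientGroup.mk' N) f = 1 ↔ ∀ b : B, ∏ᶠ x : N, (f : B → A) (b * x) = 1 := by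
  rw [Subtype.ext_iff, funext_iff, QuotientGroup.mk_surjective.forall]
  simp only [mapDomain_mk'_apply]
  rfl

end Quotient

end restrictedBase

/-- For `A` abelian and `N ◁ B`, the projection `B → B/N` extends to a
surjective homomorphism `π : A ≀ B → A ≀ (B/N)` with `π(f)(bN) = ∏_{x∈N} f(bx)` on the
base and `π(b) = bN` on `B`, whose kernel is `K_N ⋊ N`. -/
theorem stmt4 (A B : Type*) [CommGroup A] [Group B] (N : Subgroup B) [N.Normal] :
    ∃ π : Wreath A B →* Wreath A (B ⧸ N),
      Function.Surjective π ∧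
      (∀ b : B, π (SemidirectProduct.inr b) =
          SemidirectProduct.inr (QuotientGroup.mk b : B ⧸ N)) ∧
      (∀ f : restrictedBase A B,
          (π (SemidirectProduct.inl f)).right = 1 ∧
          ∀ b : B, ((π (SemidirectProduct.inl f)).left : B ⧸ N → A) (QuotientGroup.mk b)
              = ∏ᶠ x : N, (f : B → A) (b * (x : B))) ∧
      (∀ w : Wreath A B, w ∈ π.ker ↔
          (w.right ∈ N ∧ ∀ b : B, ∏ᶠ x : N, (w.left : B → A) (b * (x : B)) = 1)) := by
  have hmk := QuotientGroup.mk'_surjective N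
  refine ⟨SemidirectProduct.map (restrictedBase.mapDomain (QuotientGroup.mk' N))
    (QuotientGroup.mk' N) fun b => MonoidHom.ext (restrictedBase.mapDomain_wreathHom _ b), ?_, ?_, ?_, ?_⟩
  · exact SemidirectProduct.map_surjective (restrictedBase.mapDomain_surjective hmk) hmk
  · exact fun b => SemidirectProduct.map_inr _ _ _ b
  · exact fun f => ⟨rfl, restrictedBase.mapDomain_mk'_apply N f⟩
  · intro w
    rw [SemidirectProduct.mem_ker_map, restrictedBase.mapDomain_mk'_eq_one_iff,
      QuotientGroup.mk'_apply, QuotientGroup.eq_one_iff, and_comm]
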